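/- arXiv:2003.10570 — 5 statements merged into one kernel-verified Lean document; each statement's English description precedes it below -/
import Mathlib

section
/- For every finite digraph D there exists a dominating broadcast f of minimum cost (i.e., of cost γ_b(D)) such that every broadcast dominator is covered only by itself: for all vertices u, v with f(u) ≥ 1, f(v) ≥ 1 and u ≠ v, we have d(u,v) > f(u). -/
open scoped Classical

/-- `HasPath A k u v` means there is a directed walk of length `k` from `u` to `v`
in the digraph with arc relation `A`. -/
def HasPath {V : Type*} (A : V → V → Prop) : ℕ → V → V → Prop
  | 0, u, v => u = v
  | (n+1), u, v => ∃ w, A u w ∧ HasPath A n w v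

/-- The directed distance from `u` to `v` (in `ℕ∞`, `⊤` meaning no directed path exists). -/
noncomputable def ddist {V : Type*} (A : V → V → Prop) (u v : V) : ℕ∞ :=
  sInf {n : ℕ∞ | ∃ k : ℕ, n = (k : ℕ∞) ∧ HasPath A k u v}

/-- `f : V → ℕ` is a dominating broadcast: every vertex `v` is within directed
distance `f t` of some vertex `t` with `f t ≥ 1`. -/
def IsDomBroadcast {V : Type*} (A : V → V → Prop) (f : V → ℕ) : Prop :=
  ∀ v : V, ∃ t : V, 1 ≤ f t ∧ ddist A t v ≤ (f t : ℕ∞)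

/-- The cost of a broadcast. -/
def cost {V : Type*} [Fintype V] (f : V → ℕ) : ℕ := ∑ v, f v

/-- The broadcast domination number `γ_b`. -/
noncomputable def gammaB {V : Type*} [Fintype V] (A : V → V → Prop) : ℕ :=
  sInf {c : ℕ | ∃ f : V → ℕ, IsDomBroadcast A f ∧ cost f = c}

/-- `S` is a multipacking: for every vertex `v` and every `e ≥ 1`, at most `e`
vertices of `S` are at directed distance at most `e` from `v`. -/
noncomputable def IsMultipacking {V : Type*} [Fintype V] (A : V → V → Prop) (S : Finset V) : Prop :=
  ∀ v : V, ∀ e : ℕ, 1 ≤ e → (S.filter (fun u => ddist A v u ≤ (e : ℕ∞))).card ≤ e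

/-- The multipacking number `mp`. -/
noncomputable def mpNum {V : Type*} [Fintype V] (A : V → V → Prop) : ℕ :=
  sSup {c : ℕ | ∃ S : Finset V, IsMultipacking A S ∧ S.card = c}

/-!
Merging a dominator `v` into another dominator `u` that covers it — giving `u` the power
`f u + f v` and `v` the power `0` — keeps the broadcast dominating (by the triangle inequality,
`u` now reaches everything `v` reached) and keeps its cost, while it has one dominator fewer.
Repeating this from an optimal broadcast terminates in one whose dominators are covered only by
themselves.
-/

open Finset

section

variable {V : Type*} {A : V → V → Prop}

lemma HasPath.trans {m n : ℕ} {a b c : V} (hab : HasPath A m a b) (hbc : HasPath A n b c) :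
    HasPath A (m + n) a c := by
  induction m generalizing a with
  | zero => cases hab; simpa using hbc
  | succ k ih =>
    obtain ⟨w, haw, hwb⟩ := hab
    rw [Nat.add_right_comm]
    exact ⟨w, haw, ih hwb⟩

lemma ddist_le_of_hasPath {k : ℕ} {u v : V} (h : HasPath A k u v) : ddist A u v ≤ k :=
  sInf_le ⟨k, rfl, h⟩

lemma ddist_self (u : V) : ddist A u u = 0 :=
  nonpos_iff_eq_zero.mp (ddist_le_of_hasPath (k := 0) rfl)

lemma exists_hasPath_of_ddist_le {n : ℕ} {u v : V} (h : ddist A u v ≤ n) :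
    ∃ k ≤ n, HasPath A k u v := by
  by_contra! hlong
  have : ((n + 1 : ℕ) : ℕ∞) ≤ ddist A u v := by
    refine le_sInf ?_
    rintro m ⟨k, rfl, hk⟩
    exact_mod_cast Nat.lt_of_not_le fun hkn => hlong k hkn hk
  have := Nat.cast_le.mp (this.trans h)
  omega

lemma ddist_triangle (a b c : V) : ddist A a c ≤ ddist A a b + ddist A b c := by
  rcases eq_or_ne (ddist A a b) ⊤ with hab | hab
  · simp [hab]
  rcases eq_or_ne (ddist A b c) ⊤ with hbc | hbc
  · simp [hbc]
  lift ddist A a b to ℕ using hab with m hm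
  lift ddist A b c to ℕ using hbc with n hn
  obtain ⟨k, hkm, hk⟩ := exists_hasPath_of_ddist_le hm.symm.le
  obtain ⟨l, hln, hl⟩ := exists_hasPath_of_ddist_le hn.symm.le
  exact (ddist_le_of_hasPath (hk.trans hl)).trans (by exact_mod_cast Nat.add_le_add hkm hln)

lemma isDomBroadcast_one : IsDomBroadcast A fun _ => 1 :=
  fun v => ⟨v, le_rfl, by simp [ddist_self]⟩

lemma exists_isDomBroadcast_cost_eq_gammaB [Fintype V] :
    ∃ f, IsDomBroadcast A f ∧ cost f = gammaB A :=
  Nat.sInf_mem (s := {c | ∃ f, IsDomBroadcast A f ∧ cost f = c}) ⟨_, _, isDomBroadcast_one, rfl⟩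

lemma cost_update_add [Fintype V] (f : V → ℕ) (v : V) (b : ℕ) :
    cost (Function.update f v b) + f v = cost f + b := by
  unfold cost
  rw [sum_update_of_mem (mem_univ v), sdiff_singleton_eq_erase,
    ← add_sum_erase _ _ (mem_univ v)]
  ring

noncomputable def mergeInto (f : V → ℕ) (u v : V) : V → ℕ :=
  Function.update (Function.update f u (f u + f v)) v 0

section mergeInto

variable {f : V → ℕ} {u v : V}

lemma mergeInto_apply_left (huv : u ≠ v) : mergeInto f u v u = f u + f v := by
  simp [mergeInto, huv]

lemma mergeInto_apply_right : mergeInto f u v v = 0 := by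
  simp [mergeInto]

lemma mergeInto_apply_of_ne {w : V} (hwu : w ≠ u) (hwv : w ≠ v) : mergeInto f u v w = f w := by
  simp [mergeInto, hwu, hwv]

lemma cost_mergeInto [Fintype V] (huv : u ≠ v) : cost (mergeInto f u v) = cost f := by
  have h₁ := cost_update_add (Function.update f u (f u + f v)) v 0
  have h₂ := cost_update_add f u (f u + f v)
  rw [Function.update_of_ne huv.symm] at h₁
  exact Nat.add_right_cancel (h₁.trans (by omega))

lemma isDomBroadcast_mergeInto (hf : IsDomBroadcast A f) (huv : u ≠ v)
    (hcov : ddist A u v ≤ f u) : IsDomBroadcast A (mergeInto f u v) := by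
  intro w
  obtain ⟨t, ht, htw⟩ := hf w
  by_cases htv : t = v
  · subst htv
    refine ⟨u, by rw [mergeInto_apply_left huv]; omega, ?_⟩
    calc ddist A u w ≤ ddist A u t + ddist A t w := ddist_triangle u t w
      _ ≤ f u + f t := add_le_add hcov htw
      _ = mergeInto f u t u := by rw [mergeInto_apply_left huv]; push_cast; rfl
  by_cases htu : t = u
  · subst htu
    refine ⟨t, by rw [mergeInto_apply_left huv]; omega, htw.trans ?_⟩
    rw [mergeInto_apply_left huv]
    exact_mod_cast Nat.le_add_right _ _
  · rw [← mergeInto_apply_of_ne (f := f) htu htv] at ht htw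
    exact ⟨t, ht, htw⟩

end mergeInto

noncomputable def dominators [Fintype V] (f : V → ℕ) : Finset V :=
  univ.filter fun w => 1 ≤ f w

lemma card_dominators_mergeInto_lt [Fintype V] {f : V → ℕ} {u v : V}
    (hu : 1 ≤ f u) (hv : 1 ≤ f v) : #(dominators (mergeInto f u v)) < #(dominators f) := by
  refine card_lt_card ((ssubset_iff_of_subset ?_).mpr ⟨v, by simp [dominators, hv], ?_⟩)
  · intro w hw
    simp only [dominators, mem_filter, mem_univ, true_and] at hw ⊢
    by_cases hwv : w = v
    · simp [hwv, mergeInto_apply_right] at hw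
    by_cases hwu : w = u
    · exact hwu ▸ hu
    · rwa [mergeInto_apply_of_ne hwu hwv] at hw
  · simp [dominators, mergeInto_apply_right]

lemma IsDomBroadcast.exists_cost_eq_forall_lt_ddist [Fintype V] {f : V → ℕ}
    (hf : IsDomBroadcast A f) :
    ∃ g, IsDomBroadcast A g ∧ cost g = cost f ∧
      ∀ u v, 1 ≤ g u → 1 ≤ g v → u ≠ v → (g u : ℕ∞) < ddist A u v := by
  induction hn : #(dominators f) using Nat.strong_induction_on generalizing f with
  | _ n ih =>
    by_cases hsep : ∀ u v, 1 ≤ f u → 1 ≤ f v → u ≠ v → (f u : ℕ∞) < ddist A u v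
    · exact ⟨f, hf, rfl, hsep⟩
    push Not at hsep
    obtain ⟨u, v, hu, hv, huv, hcov⟩ := hsep
    obtain ⟨g, hg, hcost, hsepg⟩ := ih _ (hn ▸ card_dominators_mergeInto_lt hu hv)
      (isDomBroadcast_mergeInto hf huv hcov) rfl
    exact ⟨g, hg, hcost.trans (cost_mergeInto huv), hsepg⟩

end

theorem stmt_0_general {V : Type*} [Fintype V] (A : V → V → Prop) :
    ∃ f : V → ℕ, IsDomBroadcast A f ∧ cost f = gammaB A ∧
      ∀ u v : V, 1 ≤ f u → 1 ≤ f v → u ≠ v → (f u : ℕ∞) < ddist A u v := by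
  obtain ⟨f, hf, hcost⟩ := exists_isDomBroadcast_cost_eq_gammaB (A := A)
  obtain ⟨g, hg, hcost', hsep⟩ := hf.exists_cost_eq_forall_lt_ddist
  exact ⟨g, hg, hcost'.trans hcost, hsep⟩

/-- There is an optimal (minimum-cost) dominating broadcast in which every
broadcast dominator is covered only by itself. -/
theorem stmt_0 {V : Type*} [Fintype V] (A : V → V → Prop) (hirr : ∀ v, ¬ A v v) :
    ∃ f : V → ℕ, IsDomBroadcast A f ∧ cost f = gammaB A ∧
      ∀ u v : V, 1 ≤ f u → 1 ≤ f v → u ≠ v → (f u : ℕ∞) < ddist A u v :=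
  stmt_0_general A
end

section
/- For every finite digraph D, there exists a multipacking of D of maximum size that contains every source of D. -/
open scoped Classical

lemma hasPath_to_source {V : Type*} {A : V → V → Prop} {s : V} (hs : ∀ u, ¬ A u s) :
    ∀ k (v : V), HasPath A k v s → k = 0 := by
  intro k
  induction k with
  | zero => intro v _; rfl
  | succ n ih =>
    rintro v ⟨w, hvw, hw⟩
    have hn := ih w hw
    subst hn
    have hws : w = s := hw
    subst hws
    exact absurd hvw (hs v)

lemma ddist_le_iff {V : Type*} (A : V → V → Prop) (u v : V) (k : ℕ) :
    ddist A u v ≤ (k : ℕ∞) ↔ ∃ j ≤ k, HasPath A j u v := by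
  constructor
  · intro h
    by_contra hc
    push_neg at hc
    have hlb : ((k + 1 : ℕ) : ℕ∞) ≤ ddist A u v := by
      apply le_sInf
      rintro n ⟨j, rfl, hp⟩
      have hj : k + 1 ≤ j := by
        by_contra hj'
        exact hc j (by omega) hp
      exact_mod_cast hj
    have h1 : ((k + 1 : ℕ) : ℕ∞) ≤ (k : ℕ∞) := hlb.trans h
    have h2 : k + 1 ≤ k := by exact_mod_cast h1
    omega
  · rintro ⟨j, hj, hp⟩
    have h1 : ddist A u v ≤ (j : ℕ∞) := sInf_le ⟨j, rfl, hp⟩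
    exact h1.trans (by exact_mod_cast hj)

lemma ddist_self_le {V : Type*} (A : V → V → Prop) (v : V) (e : ℕ) :
    ddist A v v ≤ (e : ℕ∞) :=
  (ddist_le_iff A v v e).2 ⟨0, Nat.zero_le _, rfl⟩

lemma eq_source_of_ddist_le {V : Type*} {A : V → V → Prop} {s v : V} {e : ℕ}
    (hs : ∀ u, ¬ A u s) (h : ddist A v s ≤ (e : ℕ∞)) : v = s := by
  obtain ⟨j, _, hp⟩ := (ddist_le_iff A v s e).1 h
  have hj := hasPath_to_source hs j v hp
  subst hj
  exact hp

lemma exchange {V : Type*} [Fintype V] {A : V → V → Prop} {S : Finset V} {s : V}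
    (hS : IsMultipacking A S)
    (hmax : ∀ S' : Finset V, IsMultipacking A S' → S'.card ≤ S.card)
    (hsrc : ∀ u, ¬ A u s) (hsS : s ∉ S) :
    ∃ u ∈ S, (∃ w, A w u) ∧
      IsMultipacking A (insert s (S.erase u)) ∧ (insert s (S.erase u)).card = S.card := by
  -- insert s S is not a multipacking (it would be too big)
  have hnot : ¬ IsMultipacking A (insert s S) := by
    intro h
    have h1 := hmax _ h
    rw [Finset.card_insert_of_notMem hsS] at h1
    omega
  unfold IsMultipacking at hnot
  push_neg at hnot
  obtain ⟨v, e, he, hv⟩ := hnot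
  -- the violation must be at v = s
  have hvs : v = s := by
    by_contra hne
    rw [Finset.filter_insert, if_neg (fun h => hne (eq_source_of_ddist_le hsrc h))] at hv
    exact absurd (hS v e he) (not_le.2 hv)
  subst hvs
  rw [Finset.filter_insert, if_pos (ddist_self_le A v e),
      Finset.card_insert_of_notMem (fun h => hsS (Finset.mem_filter.1 h).1)] at hv
  -- so at least e ≥ 1 elements of S are within distance e of s (here v = s)
  have hTcard : e ≤ (S.filter (fun w => ddist A v w ≤ (e : ℕ∞))).card := by omega
  have hTne : (S.filter (fun w => ddist A v w ≤ (e : ℕ∞))).Nonempty := by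
    rw [← Finset.card_pos]; omega
  obtain ⟨u, huT, humin⟩ :=
    Finset.exists_min_image (S.filter (fun w => ddist A v w ≤ (e : ℕ∞)))
      (fun w => ddist A v w) hTne
  obtain ⟨huS, hue⟩ := Finset.mem_filter.1 huT
  -- u minimizes ddist v · over all of S
  have hmin : ∀ w ∈ S, ¬ (ddist A v w < ddist A v u) := by
    intro w hw hlt
    exact absurd (humin w (Finset.mem_filter.2 ⟨hw, hlt.le.trans hue⟩)) (not_le.2 hlt)
  refine ⟨u, huS, ?_, ?_, ?_⟩
  · -- u has an in-neighbor
    by_contra hno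
    push_neg at hno
    have : v = u := eq_source_of_ddist_le hno hue
    exact hsS (this ▸ huS)
  · -- the swapped set is a multipacking
    intro v' e' he'
    by_cases hv's : v' = v
    · subst hv's
      rw [Finset.filter_insert, if_pos (ddist_self_le A v' e'),
          Finset.card_insert_of_notMem
            (fun h => hsS (Finset.mem_of_mem_erase (Finset.mem_filter.1 h).1)),
          Finset.filter_erase]
      by_cases hd : ddist A v' u ≤ (e' : ℕ∞)
      · have hu' : u ∈ S.filter (fun w => ddist A v' w ≤ (e' : ℕ∞)) :=
          Finset.mem_filter.2 ⟨huS, hd⟩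
        have h1 : 1 ≤ (S.filter (fun w => ddist A v' w ≤ (e' : ℕ∞))).card :=
          Finset.card_pos.2 ⟨u, hu'⟩
        have h2 := hS v' e' he'
        rw [Finset.card_erase_of_mem hu']
        omega
      · have hemp : S.filter (fun w => ddist A v' w ≤ (e' : ℕ∞)) = ∅ := by
          rw [Finset.filter_eq_empty_iff]
          intro w hw hle
          exact hmin w hw (lt_of_le_of_lt hle (not_le.1 hd))
        rw [hemp]
        simpa using he'
    · rw [Finset.filter_insert, if_neg (fun h => hv's (eq_source_of_ddist_le hsrc h))]
      calc ((S.erase u).filter (fun w => ddist A v' w ≤ (e' : ℕ∞))).card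
          ≤ (S.filter (fun w => ddist A v' w ≤ (e' : ℕ∞))).card :=
            Finset.card_le_card (Finset.filter_subset_filter _ (Finset.erase_subset u S))
        _ ≤ e' := hS v' e' he'
  · -- cardinality is unchanged
    have h1 : 1 ≤ S.card := Finset.card_pos.2 ⟨u, huS⟩
    rw [Finset.card_insert_of_notMem (fun h => hsS (Finset.mem_of_mem_erase h)),
        Finset.card_erase_of_mem huS]
    omega

/-- Every finite digraph has a maximum-size multipacking containing all its sources. -/
theorem stmt_3 {V : Type*} [Fintype V] (A : V → V → Prop) (hirr : ∀ v, ¬ A v v) :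
    ∃ S : Finset V, IsMultipacking A S ∧
      (∀ S' : Finset V, IsMultipacking A S' → S'.card ≤ S.card) ∧
      ∀ s : V, (∀ u : V, ¬ A u s) → s ∈ S := by
  classical
  have hbdd : BddAbove {c : ℕ | ∃ S : Finset V, IsMultipacking A S ∧ S.card = c} :=
    ⟨Fintype.card V, by rintro c ⟨S, -, rfl⟩; exact Finset.card_le_univ S⟩
  have hne : sSup {c : ℕ | ∃ S : Finset V, IsMultipacking A S ∧ S.card = c} ∈
      {c : ℕ | ∃ S : Finset V, IsMultipacking A S ∧ S.card = c} := by
    apply Nat.sSup_mem _ hbdd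
    exact ⟨0, ∅, by intro v e he; simp, Finset.card_empty⟩
  obtain ⟨S0, hmp0, hcard0⟩ := hne
  have hmax0 : ∀ S' : Finset V, IsMultipacking A S' → S'.card ≤ S0.card := by
    intro S' h'
    rw [hcard0]
    exact le_csSup hbdd ⟨S', h', rfl⟩
  have key : ∀ n (S : Finset V), IsMultipacking A S →
      (∀ S' : Finset V, IsMultipacking A S' → S'.card ≤ S.card) →
      ((Finset.univ.filter (fun s : V => ∀ u, ¬ A u s)) \ S).card ≤ n →
      ∃ T : Finset V, IsMultipacking A T ∧
        (∀ S' : Finset V, IsMultipacking A S' → S'.card ≤ T.card) ∧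
        ∀ s : V, (∀ u : V, ¬ A u s) → s ∈ T := by
    intro n
    induction n with
    | zero =>
      intro S hS hmax h0
      refine ⟨S, hS, hmax, ?_⟩
      intro s hs
      by_contra hsS
      have hm : s ∈ (Finset.univ.filter (fun s : V => ∀ u, ¬ A u s)) \ S :=
        Finset.mem_sdiff.2 ⟨Finset.mem_filter.2 ⟨Finset.mem_univ s, hs⟩, hsS⟩
      have := Finset.card_pos.2 ⟨s, hm⟩
      omega
    | succ n ih =>
      intro S hS hmax hcard
      by_cases hall : ∀ s : V, (∀ u, ¬ A u s) → s ∈ S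
      · exact ⟨S, hS, hmax, hall⟩
      · push_neg at hall
        obtain ⟨s, hs, hsS⟩ := hall
        obtain ⟨u, huS, ⟨w, hw⟩, hmp', hcard'⟩ := exchange hS hmax hs hsS
        apply ih (insert s (S.erase u)) hmp' (fun S' h' => hcard' ▸ hmax S' h')
        have hsub : (Finset.univ.filter (fun s : V => ∀ u, ¬ A u s)) \ (insert s (S.erase u)) ⊆
            ((Finset.univ.filter (fun s : V => ∀ u, ¬ A u s)) \ S).erase s := by
          intro t ht
          rw [Finset.mem_sdiff] at ht
          obtain ⟨htS, htn⟩ := ht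
          have hts : t ≠ s := by rintro rfl; exact htn (Finset.mem_insert_self _ _)
          refine Finset.mem_erase.2 ⟨hts, Finset.mem_sdiff.2 ⟨htS, ?_⟩⟩
          intro htS'
          have htu : t ≠ u := by
            rintro rfl
            exact absurd hw ((Finset.mem_filter.1 htS).2 w)
          exact htn (Finset.mem_insert_of_mem (Finset.mem_erase.2 ⟨htu, htS'⟩))
        have hle := Finset.card_le_card hsub
        have hse : s ∈ (Finset.univ.filter (fun s : V => ∀ u, ¬ A u s)) \ S :=
          Finset.mem_sdiff.2 ⟨Finset.mem_filter.2 ⟨Finset.mem_univ s, hs⟩, hsS⟩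
        have hee := Finset.card_erase_of_mem hse
        omega
  exact key ((Finset.univ.filter (fun s : V => ∀ u, ¬ A u s)) \ S0).card S0 hmp0 hmax0 le_rfl
end

section
/- Let D be a single-sourced layered DAG with layers V_0, …, V_t. Then there exists a multipacking S of D of maximum size such that |S ∩ V_i| ≤ 1 for every 1 ≤ i ≤ t. -/
open scoped Classical

set_option linter.unusedSectionVars false

namespace MP4

variable {V : Type*} {A : V → V → Prop}

lemma hp_trans : ∀ {j : ℕ} {u v : V} {k : ℕ} {w : V},
    HasPath A j u v → HasPath A k v w → HasPath A (j + k) u w := by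
  intro j
  induction j with
  | zero => intro u v k w h1 h2; cases h1; simpa using h2
  | succ n ih =>
    rintro u v k w ⟨x, hx, hp⟩ h2
    have heq : n + 1 + k = (n + k) + 1 := by omega
    rw [heq]
    exact (show HasPath A ((n+k)+1) u w from ⟨x, hx, ih hp h2⟩)

lemma hp_one {u v : V} (h : A u v) : HasPath A 1 u v := ⟨v, h, rfl⟩

lemma hp_one_arc {u v : V} (h : HasPath A 1 u v) : A u v := by
  obtain ⟨w, hw, h0⟩ := h; cases h0; exact hw

lemma ddist_le_of_path {u v : V} {k e : ℕ} (h : HasPath A k u v) (hk : k ≤ e) :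
    ddist A u v ≤ (e : ℕ∞) := by
  refine le_trans (sInf_le ⟨k, rfl, h⟩) ?_
  exact_mod_cast hk

lemma exists_path_of_ddist {u v : V} {e : ℕ} (h : ddist A u v ≤ (e : ℕ∞)) :
    ∃ k ≤ e, HasPath A k u v := by
  by_contra hcon
  push_neg at hcon
  have h2 : (e : ℕ∞) + 1 ≤ ddist A u v := by
    apply le_sInf
    rintro x ⟨k, rfl, hp⟩
    have : e < k := by
      by_contra hk
      exact hcon k (le_of_not_gt hk) hp
    exact_mod_cast this
  have : (e : ℕ∞) < (e : ℕ∞) + 1 := by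
    exact (ENat.lt_add_one_iff (ENat.coe_ne_top e)).mpr le_rfl
  exact absurd (lt_of_lt_of_le this (le_trans h2 h)) (lt_irrefl _)

lemma ddist_self_le {v : V} {e : ℕ} : ddist A v v ≤ (e : ℕ∞) :=
  ddist_le_of_path (show HasPath A 0 v v from rfl) (Nat.zero_le e)


section Ctx

variable {t : ℕ} {layer : V → Fin (t+1)}
variable [Fintype V]

lemma hp_layer (harc : ∀ u v, A u v → (layer v : ℕ) = (layer u : ℕ) + 1) :
    ∀ {k : ℕ} {u v : V}, HasPath A k u v → (layer v : ℕ) = (layer u : ℕ) + k := by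
  intro k
  induction k with
  | zero => intro u v h; cases h; simp
  | succ n ih =>
    rintro u v ⟨w, hw, hp⟩
    have h1 := harc u w hw
    have h2 := ih hp
    omega

lemma ancestor (harc : ∀ u v, A u v → (layer v : ℕ) = (layer u : ℕ) + 1)
    (hin : ∀ v, layer v ≠ (0 : Fin (t+1)) → ∃ u, A u v) :
    ∀ (k : ℕ) (v : V), k ≤ (layer v : ℕ) →
      ∃ w, (layer w : ℕ) + k = (layer v : ℕ) ∧ HasPath A k w v := by
  intro k
  induction k with
  | zero => intro v _; exact ⟨v, by simp, rfl⟩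
  | succ n ih =>
    intro v hk
    obtain ⟨w, hw, hp⟩ := ih v (by omega)
    have hw0 : layer w ≠ (0 : Fin (t+1)) := by
      intro h0
      rw [h0] at hw
      simp at hw
      omega
    obtain ⟨u, hu⟩ := hin w hw0
    refine ⟨u, ?_, ?_⟩
    · have := harc u w hu
      omega
    · have : HasPath A (1 + n) u v := hp_trans (hp_one hu) hp
      simpa [Nat.add_comm] using this

lemma subset_multipacking {S S' : Finset V} (hsub : S' ⊆ S) (hS : IsMultipacking A S) :
    IsMultipacking A S' := by
  intro v e he
  exact le_trans (Finset.card_le_card (Finset.filter_subset_filter _ hsub)) (hS v e he)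

/-- A set with pairwise-distinct layers and no arcs between consecutive-layer members. -/
def GoodSet (A : V → V → Prop) (layer : V → Fin (t+1)) (W : Finset V) : Prop :=
  (∀ u ∈ W, ∀ v ∈ W, layer u = layer v → u = v) ∧
  (∀ u ∈ W, ∀ v ∈ W, (layer v : ℕ) = (layer u : ℕ) + 1 → ¬ A u v)

lemma goodSet_multipacking (harc : ∀ u v, A u v → (layer v : ℕ) = (layer u : ℕ) + 1)
    {W : Finset V} (hW : GoodSet A layer W) : IsMultipacking A W := by
  intro v e he
  set T := W.filter (fun u => ddist A v u ≤ (e : ℕ∞)) with hT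
  have hTW : T ⊆ W := Finset.filter_subset _ _
  have hinj : Set.InjOn (fun u => (layer u : ℕ)) (T : Set V) := by
    intro x hx y hy hxy
    exact hW.1 x (hTW (by exact_mod_cast hx)) y (hTW (by exact_mod_cast hy))
      (Fin.ext (by exact_mod_cast hxy))
  have hcard : T.card = (T.image (fun u => (layer u : ℕ))).card :=
    (Finset.card_image_of_injOn hinj).symm
  by_cases hv : v ∈ W
  · have hsub : T.image (fun u => (layer u : ℕ)) ⊆
        insert ((layer v : ℕ)) (Finset.Icc ((layer v : ℕ) + 2) ((layer v : ℕ) + e)) := by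
      intro i hi
      simp only [Finset.mem_image] at hi
      obtain ⟨u, hu, rfl⟩ := hi
      have hu' := Finset.mem_filter.mp hu
      obtain ⟨k, hk, hp⟩ := exists_path_of_ddist hu'.2
      have hlay := hp_layer harc hp
      rcases Nat.lt_or_ge k 2 with hk2 | hk2
      · interval_cases k
        · cases hp; simp
        · exact absurd (hp_one_arc hp) (hW.2 v hv u hu'.1 (by omega))
      · simp only [Finset.mem_insert, Finset.mem_Icc]
        right; omega
    calc T.card = _ := hcard
      _ ≤ _ := Finset.card_le_card hsub
      _ ≤ (Finset.Icc ((layer v : ℕ) + 2) ((layer v : ℕ) + e)).card + 1 :=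
          Finset.card_insert_le _ _
      _ ≤ e := by rw [Nat.card_Icc]; omega
  · have hsub : T.image (fun u => (layer u : ℕ)) ⊆
        Finset.Icc ((layer v : ℕ) + 1) ((layer v : ℕ) + e) := by
      intro i hi
      simp only [Finset.mem_image] at hi
      obtain ⟨u, hu, rfl⟩ := hi
      have hu' := Finset.mem_filter.mp hu
      obtain ⟨k, hk, hp⟩ := exists_path_of_ddist hu'.2
      have hlay := hp_layer harc hp
      have hk1 : 1 ≤ k := by
        rcases Nat.eq_zero_or_pos k with h0 | h1
        · subst h0; cases hp; exact absurd hu'.1 hv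
        · exact h1
      simp only [Finset.mem_Icc]; omega
    calc T.card = _ := hcard
      _ ≤ _ := Finset.card_le_card hsub
      _ ≤ e := by rw [Nat.card_Icc]; omega

lemma filter_split (S : Finset V) (g : ℕ) :
    (S.filter (fun z => g ≤ (layer z : ℕ))).card
      = (S.filter (fun z => (layer z : ℕ) = g)).card
        + (S.filter (fun z => g + 1 ≤ (layer z : ℕ))).card := by
  rw [← Finset.card_union_of_disjoint]
  · congr 1
    ext z
    simp only [Finset.mem_union, Finset.mem_filter]
    constructor
    · rintro ⟨hz, h⟩
      rcases Nat.eq_or_lt_of_le h with h1 | h2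
      · exact Or.inl ⟨hz, h1.symm⟩
      · exact Or.inr ⟨hz, h2⟩
    · rintro (⟨hz, h⟩ | ⟨hz, h⟩) <;> exact ⟨hz, by omega⟩
  · rw [Finset.disjoint_left]
    intro z hz1 hz2
    simp only [Finset.mem_filter] at hz1 hz2
    omega


/-- `GoodN B n w`: `w` is at layer `B - n` and starts a "complement path" up to layer `B`. -/
def GoodN (A : V → V → Prop) (layer : V → Fin (t+1)) (B : ℕ) : ℕ → V → Prop
  | 0, w => (layer w : ℕ) = B
  | (n+1), w => (layer w : ℕ) + (n+1) = B ∧ ∃ y, GoodN A layer B n y ∧ ¬ A w y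

lemma goodN_layer {B n : ℕ} {w : V} (h : GoodN A layer B n w) : (layer w : ℕ) + n = B := by
  cases n with
  | zero => simpa [GoodN] using h
  | succ m => exact h.1

lemma goodN_succ_iff {B n : ℕ} {w : V} :
    GoodN A layer B (n+1) w ↔ ((layer w : ℕ) + (n+1) = B ∧ ∃ y, GoodN A layer B n y ∧ ¬ A w y) :=
  Iff.rfl

lemma lemFmain
    (harc : ∀ u v, A u v → (layer v : ℕ) = (layer u : ℕ) + 1)
    (hlayers : ∀ i : Fin (t+1), ∃ v, layer v = i)
    (hin : ∀ v, layer v ≠ (0 : Fin (t+1)) → ∃ u, A u v)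
    (S : Finset V) (hS : IsMultipacking A S)
    (B a : ℕ) (hBt : B ≤ t)
    (hB : ∀ z ∈ S, (layer z : ℕ) ≤ B)
    (dens : ∀ g, a ≤ g → g ≤ B →
      B + 1 ≤ (S.filter (fun z => g ≤ (layer z : ℕ))).card + g) :
    ∀ n : ℕ, ∀ g : ℕ, g + n = B → a ≤ g →
      ( (∀ z ∈ S, (layer z : ℕ) = g → GoodN A layer B n z)
      ∧ (∃ w, GoodN A layer B n w)
      ∧ ( (B + 1 ≤ (S.filter (fun z => g + 1 ≤ (layer z : ℕ))).card + g) →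
          ∀ w : V, (layer w : ℕ) = g → GoodN A layer B n w )
      ∧ ( (g = B ∨ B + 1 ≤ (S.filter (fun z => g + 1 ≤ (layer z : ℕ))).card + g) →
          ∀ z ∈ S, g ≤ (layer z : ℕ) →
            ∃ w, GoodN A layer B n w ∧ ∃ k, g + k = (layer z : ℕ) ∧ HasPath A k w z ) ) := by
  intro n
  induction n with
  | zero =>
    intro g hg ha
    have hgB : g = B := by omega
    subst hgB
    have hempty : (S.filter (fun z => g + 1 ≤ (layer z : ℕ))) = ∅ := by
      apply Finset.filter_eq_empty_iff.mpr
      intro z hz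
      have := hB z hz
      omega
    refine ⟨?_, ?_, ?_, ?_⟩
    · intro z _ hz
      exact hz
    · have hd := dens g ha le_rfl
      have hpos : 0 < (S.filter (fun z => g ≤ (layer z : ℕ))).card := by omega
      obtain ⟨z, hz⟩ := Finset.card_pos.mp hpos
      have hz' := Finset.mem_filter.mp hz
      have : (layer z : ℕ) = g := le_antisymm (hB z hz'.1) hz'.2
      exact ⟨z, this⟩
    · intro hcond
      rw [hempty] at hcond
      simp only [Finset.card_empty, Nat.zero_add] at hcond
      omega
    · intro _ z hzS hgz
      have hz : (layer z : ℕ) = g := le_antisymm (hB z hzS) hgz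
      exact ⟨z, hz, 0, by omega, rfl⟩
  | succ n ih =>
    intro g hg ha
    have hgB : g < B := by omega
    obtain ⟨ih1, ih2, ih3, ih4⟩ := ih (g+1) (by omega) (by omega)
    have hsplit := filter_split (layer := layer) S (g+1)
    -- abbreviations as plain numbers
    have hdens1 : B + 1 ≤ (S.filter (fun z => g + 1 ≤ (layer z : ℕ))).card + (g + 1) :=
      dens (g+1) (by omega) (by omega)
    -- Full coverage at layer g+1, given appropriate surplus
    -- C2 : a "bad" vertex at layer g together with full coverage bounds D1
    have c2 : ∀ w : V, (layer w : ℕ) = g → (∀ y, GoodN A layer B n y → A w y) →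
        (∀ z ∈ S, g + 1 ≤ (layer z : ℕ) →
          ∃ y, GoodN A layer B n y ∧ ∃ k, (g+1) + k = (layer z : ℕ) ∧ HasPath A k y z) →
        (S.filter (fun z => g + 1 ≤ (layer z : ℕ))).card ≤ n + 1 := by
      intro w hw hbad hFl
      have hsub : (S.filter (fun z => g + 1 ≤ (layer z : ℕ)))
          ⊆ (S.filter (fun u => ddist A w u ≤ ((n+1 : ℕ) : ℕ∞))) := by
        intro z hz
        have hz' := Finset.mem_filter.mp hz
        obtain ⟨y, hy, k, hk, hp⟩ := hFl z hz'.1 hz'.2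
        have harcwy : A w y := hbad y hy
        have hpath : HasPath A (1 + k) w z := hp_trans (hp_one harcwy) hp
        have hzB := hB z hz'.1
        refine Finset.mem_filter.mpr ⟨hz'.1, ddist_le_of_path hpath (by omega)⟩
      calc (S.filter (fun z => g + 1 ≤ (layer z : ℕ))).card
          ≤ _ := Finset.card_le_card hsub
        _ ≤ n + 1 := hS w (n+1) (by omega)
    -- two same-layer good S-elements kill a bad vertex
    have cpair : ∀ w : V, ∀ z₁ z₂ : V, z₁ ∈ S → z₂ ∈ S → z₁ ≠ z₂ →
        ddist A w z₁ ≤ ((1:ℕ) : ℕ∞) → ddist A w z₂ ≤ ((1:ℕ) : ℕ∞) → False := by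
      intro w z₁ z₂ h1 h2 hne hd1 hd2
      have hsub : ({z₁, z₂} : Finset V) ⊆ S.filter (fun u => ddist A w u ≤ ((1:ℕ) : ℕ∞)) := by
        intro x hx
        simp only [Finset.mem_insert, Finset.mem_singleton] at hx
        rcases hx with rfl | rfl
        · exact Finset.mem_filter.mpr ⟨h1, hd1⟩
        · exact Finset.mem_filter.mpr ⟨h2, hd2⟩
      have h2le : 2 ≤ (S.filter (fun u => ddist A w u ≤ ((1:ℕ) : ℕ∞))).card := by
        calc 2 = ({z₁, z₂} : Finset V).card := (Finset.card_pair hne).symm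
          _ ≤ _ := Finset.card_le_card hsub
      have := hS w 1 le_rfl
      omega
    -- STATEMENT 1
    have S1 : ∀ z ∈ S, (layer z : ℕ) = g → GoodN A layer B (n+1) z := by
      intro z hzS hz
      rw [goodN_succ_iff]
      refine ⟨by omega, ?_⟩
      by_contra hbad'
      push_neg at hbad'
      have hbad : ∀ y, GoodN A layer B n y → A z y := by
        intro y hy
        by_contra hA
        exact hA (hbad' y hy)
      rcases Nat.eq_zero_or_pos (S.filter (fun x => (layer x : ℕ) = g + 1)).card with hN0 | hN1
      · -- empty layer g+1 : full coverage + C3-style counting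
        have hFl := ih4 (Or.inr (by omega)) 
        -- C3: insert z (upper) ⊆ ball(z, n+1)
        have hsub : insert z (S.filter (fun x => g + 1 ≤ (layer x : ℕ)))
            ⊆ S.filter (fun u => ddist A z u ≤ ((n+1 : ℕ) : ℕ∞)) := by
          intro x hx
          rcases Finset.mem_insert.mp hx with rfl | hx'
          · exact Finset.mem_filter.mpr ⟨hzS, ddist_self_le⟩
          · have hx'' := Finset.mem_filter.mp hx'
            obtain ⟨y, hy, k, hk, hp⟩ := hFl x hx''.1 hx''.2
            have hpath : HasPath A (1 + k) z x := hp_trans (hp_one (hbad y hy)) hp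
            have := hB x hx''.1
            exact Finset.mem_filter.mpr ⟨hx''.1, ddist_le_of_path hpath (by omega)⟩
        have hznot : z ∉ (S.filter (fun x => g + 1 ≤ (layer x : ℕ))) := by
          intro hmem
          have := (Finset.mem_filter.mp hmem).2
          omega
        have hcard : (S.filter (fun x => g + 1 ≤ (layer x : ℕ))).card + 1 ≤ n + 1 := by
          calc (S.filter (fun x => g + 1 ≤ (layer x : ℕ))).card + 1
              = (insert z (S.filter (fun x => g + 1 ≤ (layer x : ℕ)))).card :=
                (Finset.card_insert_of_notMem hznot).symm
            _ ≤ _ := Finset.card_le_card hsub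
            _ ≤ n + 1 := hS z (n+1) (by omega)
        omega
      · obtain ⟨z₁, hz₁⟩ := Finset.card_pos.mp hN1
        have hz₁' := Finset.mem_filter.mp hz₁
        have hgood := ih1 z₁ hz₁'.1 hz₁'.2
        have harc' : A z z₁ := hbad z₁ hgood
        exact cpair z z z₁ hzS hz₁'.1 (by intro h; rw [h] at hz; omega)
          ddist_self_le (ddist_le_of_path (hp_one harc') le_rfl)
    -- STATEMENT 3
    have S3 : (B + 1 ≤ (S.filter (fun z => g + 1 ≤ (layer z : ℕ))).card + g) →
        ∀ w : V, (layer w : ℕ) = g → GoodN A layer B (n+1) w := by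
      intro hDcond w hw
      rw [goodN_succ_iff]
      refine ⟨by omega, ?_⟩
      by_contra hbad'
      push_neg at hbad'
      have hbad : ∀ y, GoodN A layer B n y → A w y := by
        intro y hy
        by_contra hA
        exact hA (hbad' y hy)
      rcases Nat.lt_or_ge (S.filter (fun x => (layer x : ℕ) = g + 1)).card 2 with hN1 | hN2
      · -- N1 ≤ 1 : get full coverage, then C2
        have hFl := ih4 (Or.inr (by omega))
        have := c2 w hw hbad hFl
        omega
      · obtain ⟨z₁, hz₁m, z₂, hz₂m, hne⟩ := Finset.one_lt_card.mp hN2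
        have hz₁' := Finset.mem_filter.mp hz₁m
        have hz₂' := Finset.mem_filter.mp hz₂m
        exact cpair w z₁ z₂ hz₁'.1 hz₂'.1 hne
          (ddist_le_of_path (hp_one (hbad z₁ (ih1 z₁ hz₁'.1 hz₁'.2))) le_rfl)
          (ddist_le_of_path (hp_one (hbad z₂ (ih1 z₂ hz₂'.1 hz₂'.2))) le_rfl)
    -- STATEMENT 2
    have S2 : ∃ w, GoodN A layer B (n+1) w := by
      rcases Nat.eq_zero_or_pos (S.filter (fun x => (layer x : ℕ) = g)).card with hN0 | hN1
      · have hsplitg := filter_split (layer := layer) S g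
        have hdg := dens g ha (by omega)
        obtain ⟨w, hw⟩ := hlayers ⟨g, by omega⟩
        have hwg : (layer w : ℕ) = g := by rw [hw]
        exact ⟨w, S3 (by omega) w hwg⟩
      · obtain ⟨z, hzm⟩ := Finset.card_pos.mp hN1
        have hz' := Finset.mem_filter.mp hzm
        exact ⟨z, S1 z hz'.1 hz'.2⟩
    -- STATEMENT 4
    have S4 : (g = B ∨ B + 1 ≤ (S.filter (fun z => g + 1 ≤ (layer z : ℕ))).card + g) →
        ∀ z ∈ S, g ≤ (layer z : ℕ) →
          ∃ w, GoodN A layer B (n+1) w ∧ ∃ k, g + k = (layer z : ℕ) ∧ HasPath A k w z := by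
      intro hcond z hzS hgz
      have hDcond : B + 1 ≤ (S.filter (fun x => g + 1 ≤ (layer x : ℕ))).card + g := by
        rcases hcond with h | h
        · omega
        · exact h
      rcases Nat.eq_or_lt_of_le hgz with heq | hlt
      · exact ⟨z, S3 hDcond z heq.symm, 0, by omega, rfl⟩
      · obtain ⟨w, hw, hp⟩ := ancestor (A := A) harc hin ((layer z : ℕ) - g) z (by omega)
        have hwg : (layer w : ℕ) = g := by omega
        exact ⟨w, S3 hDcond w hwg, (layer z : ℕ) - g, by omega, hp⟩
    exact ⟨S1, S2, S3, S4⟩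

lemma goodN_extract {B : ℕ} : ∀ (n : ℕ) (w : V), GoodN A layer B n w →
    ∃ c : ℕ → V, c n = w ∧ (∀ k, k ≤ n → GoodN A layer B k (c k)) ∧
      (∀ k, k < n → ¬ A (c (k+1)) (c k)) := by
  intro n
  induction n with
  | zero =>
    intro w hw
    exact ⟨fun _ => w, rfl, by intro k hk; interval_cases k; exact hw, by intro k hk; omega⟩
  | succ n ihn =>
    intro w hw
    obtain ⟨hl, y, hy, hnA⟩ := (goodN_succ_iff).mp hw
    obtain ⟨c', hc'n, hc'good, hc'link⟩ := ihn y hy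
    refine ⟨fun k => if k = n + 1 then w else c' k, by simp, ?_, ?_⟩
    · intro k hk
      rcases Nat.eq_or_lt_of_le hk with heq | hlt
      · simp only [heq, if_pos rfl]
        exact heq ▸ hw
      · have hk' : k ≠ n + 1 := by omega
        simp only [if_neg hk']
        exact hc'good k (by omega)
    · intro k hk
      rcases Nat.eq_or_lt_of_le (Nat.lt_succ_iff.mp hk) with heq | hlt
      · subst heq
        have h1 : k + 1 = k + 1 := rfl
        simp only [if_pos rfl, if_neg (by omega : k ≠ k + 1)]
        rw [hc'n]
        exact hnA
      · simp only [if_neg (by omega : k + 1 ≠ n + 1), if_neg (by omega : k ≠ n + 1)]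
        exact hc'link k hlt


lemma source_path (harc : ∀ u v, A u v → (layer v : ℕ) = (layer u : ℕ) + 1)
    (hin : ∀ v, layer v ≠ (0 : Fin (t+1)) → ∃ u, A u v)
    (hsource : ∃! s : V, layer s = (0 : Fin (t+1))) :
    ∃ s : V, ∀ v : V, HasPath A ((layer v : ℕ)) s v := by
  obtain ⟨s, hs0, huniq⟩ := hsource
  refine ⟨s, fun v => ?_⟩
  obtain ⟨w, hw, hp⟩ := ancestor (A := A) harc hin (layer v : ℕ) v le_rfl
  have hw0 : layer w = (0 : Fin (t+1)) := by
    have h0 : (layer w : ℕ) = 0 := by omega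
    exact Fin.ext (by simpa using h0)
  rwa [huniq w hw0] at hp

lemma lemB (harc : ∀ u v, A u v → (layer v : ℕ) = (layer u : ℕ) + 1)
    (hlayers : ∀ i : Fin (t+1), ∃ v, layer v = i)
    (hsource : ∃! s : V, layer s = (0 : Fin (t+1)))
    (hin : ∀ v, layer v ≠ (0 : Fin (t+1)) → ∃ u, A u v) :
    ∀ (m : ℕ) (S : Finset V), IsMultipacking A S → S.card ≤ m →
      ∀ Bd : ℕ, (∀ z ∈ S, (layer z : ℕ) ≤ Bd) →
      ∃ W : Finset V, GoodSet A layer W ∧ W.card = S.card ∧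
        ∀ v ∈ W, (layer v : ℕ) ≤ Bd := by
  intro m
  induction m with
  | zero =>
    intro S _ hcard Bd _
    have hS0 : S = ∅ := Finset.card_eq_zero.mp (by omega)
    subst hS0
    exact ⟨∅, ⟨by simp, by simp⟩, by simp, by simp⟩
  | succ m ihm =>
    intro S hS hcard Bd hBd
    by_cases hSe : S = ∅
    · subst hSe
      exact ⟨∅, ⟨by simp, by simp⟩, by simp, by simp⟩
    have hSne : S.Nonempty := Finset.nonempty_iff_ne_empty.mpr hSe
    have hSimg : (S.image (fun z => (layer z : ℕ))).Nonempty := hSne.image _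
    obtain ⟨B₀, hB₀, zM, hzMS, hzMB⟩ :
        ∃ B₀ : ℕ, (∀ z ∈ S, (layer z : ℕ) ≤ B₀) ∧ ∃ z ∈ S, (layer z : ℕ) = B₀ := by
      refine ⟨(S.image (fun z => (layer z : ℕ))).max' hSimg,
        fun z hz => Finset.le_max' (S.image (fun z => (layer z : ℕ))) ((layer z : ℕ))
          (Finset.mem_image_of_mem _ hz), ?_⟩
      obtain ⟨x, hx, hx2⟩ := Finset.mem_image.mp ((S.image (fun z => (layer z : ℕ))).max'_mem hSimg)
      exact ⟨x, hx, hx2⟩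
    have hB₀Bd : B₀ ≤ Bd := hzMB ▸ hBd zM hzMS
    have hB₀t : B₀ ≤ t := hzMB ▸ Fin.is_le (layer zM)
    rcases Nat.eq_zero_or_pos B₀ with hB00 | hB01
    · -- all of S in layer 0
      refine ⟨S, ⟨?_, ?_⟩, rfl, hBd⟩
      · intro u hu v hv huv
        obtain ⟨s, hs0, huniq⟩ := hsource
        have hu0 : layer u = (0 : Fin (t+1)) := by
          have : (layer u : ℕ) = 0 := by have := hB₀ u hu; omega
          exact Fin.ext (by simpa using this)
        have hv0 : layer v = (0 : Fin (t+1)) := by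
          have : (layer v : ℕ) = 0 := by have := hB₀ v hv; omega
          exact Fin.ext (by simpa using this)
        rw [huniq u hu0, huniq v hv0]
      · intro u hu v hv hlv
        have := hB₀ v hv
        omega
    · -- B₀ ≥ 1
      have hP : ∃ x : ℕ, ∀ g, x ≤ g → g ≤ B₀ →
          B₀ + 1 ≤ (S.filter (fun z => g ≤ (layer z : ℕ))).card + g := by
        refine ⟨B₀, fun g hg1 hg2 => ?_⟩
        have hgB : g = B₀ := by omega
        have hmem : zM ∈ S.filter (fun z => g ≤ (layer z : ℕ)) :=
          Finset.mem_filter.mpr ⟨hzMS, by omega⟩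
        have : 0 < (S.filter (fun z => g ≤ (layer z : ℕ))).card :=
          Finset.card_pos.mpr ⟨zM, hmem⟩
        omega
      classical
      have hPB₀ : ∀ g, B₀ ≤ g → g ≤ B₀ →
          B₀ + 1 ≤ (S.filter (fun z => g ≤ (layer z : ℕ))).card + g := by
        intro g hg1 hg2
        have hgB : g = B₀ := by omega
        have hmem : zM ∈ S.filter (fun z => g ≤ (layer z : ℕ)) :=
          Finset.mem_filter.mpr ⟨hzMS, by omega⟩
        have : 0 < (S.filter (fun z => g ≤ (layer z : ℕ))).card :=
          Finset.card_pos.mpr ⟨zM, hmem⟩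
        omega
      obtain ⟨a, ha, hamin⟩ :
          ∃ a : ℕ, (∀ g, a ≤ g → g ≤ B₀ →
              B₀ + 1 ≤ (S.filter (fun z => g ≤ (layer z : ℕ))).card + g) ∧
            (∀ b, b < a → ¬ (∀ g, b ≤ g → g ≤ B₀ →
              B₀ + 1 ≤ (S.filter (fun z => g ≤ (layer z : ℕ))).card + g)) :=
        ⟨Nat.find hP, Nat.find_spec hP, fun b hb => Nat.find_min hP hb⟩
      have haB₀ : a ≤ B₀ := by
        by_contra hcon
        exact hamin B₀ (by omega) hPB₀
      -- a ≥ 1 via the source vertex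
      have ha1 : 1 ≤ a := by
        by_contra ha0
        have ha0' : a = 0 := by omega
        obtain ⟨s, hs⟩ := source_path harc hin hsource
        have hsub : S ⊆ S.filter (fun u => ddist A s u ≤ ((B₀ : ℕ) : ℕ∞)) := by
          intro z hz
          exact Finset.mem_filter.mpr ⟨hz, ddist_le_of_path (hs z) (hB₀ z hz)⟩
        have hcardB : S.card ≤ B₀ :=
          le_trans (Finset.card_le_card hsub) (hS s B₀ (by omega))
        have := ha 0 (by omega) (by omega)
        have hfull : S.filter (fun z => 0 ≤ (layer z : ℕ)) = S :=
          Finset.filter_true_of_mem (fun z _ => Nat.zero_le _)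
        rw [hfull] at this
        omega
      -- failure of density at a-1
      have hnot : ¬ (∀ g, a - 1 ≤ g → g ≤ B₀ →
          B₀ + 1 ≤ (S.filter (fun z => g ≤ (layer z : ℕ))).card + g) :=
        hamin (a - 1) (by omega)
      push_neg at hnot
      obtain ⟨g₀, hg₀1, hg₀2, hg₀3⟩ := hnot
      have hg₀eq : g₀ = a - 1 := by
        by_contra hne
        have : a ≤ g₀ := by omega
        have := ha g₀ this hg₀2
        omega
      subst hg₀eq
      have hsplit := filter_split (layer := layer) S (a - 1)
      have haeq : (a - 1) + 1 = a := by omega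
      rw [haeq] at hsplit
      have hDa : B₀ + 1 ≤ (S.filter (fun z => a ≤ (layer z : ℕ))).card + a :=
        ha a le_rfl haB₀
      -- deduce : N(a-1) = 0 and Da exactly B₀ + 1 - a
      have hNa1 : (S.filter (fun z => (layer z : ℕ) = a - 1)).card = 0 := by omega
      have hDaeq : (S.filter (fun z => a ≤ (layer z : ℕ))).card + a = B₀ + 1 := by omega
      -- bottom part
      set Sbot := S.filter (fun z => ¬ (a - 1 ≤ (layer z : ℕ))) with hSbotdef
      have hpart := Finset.card_filter_add_card_filter_not
        (s := S) (p := fun z => a - 1 ≤ (layer z : ℕ))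
      have hbotcard : Sbot.card + (S.filter (fun z => a - 1 ≤ (layer z : ℕ))).card = S.card := by
        rw [hSbotdef]
        omega
      have hbotsub : Sbot ⊆ S := Finset.filter_subset _ _
      have hbotmp : IsMultipacking A Sbot := subset_multipacking hbotsub hS
      have hbotbound : ∀ z ∈ Sbot, (layer z : ℕ) ≤ a - 2 := by
        intro z hz
        have := (Finset.mem_filter.mp hz).2
        omega
      have hbotlt : Sbot.card ≤ m := by
        have hDa1 : 1 ≤ (S.filter (fun z => a ≤ (layer z : ℕ))).card := by omega
        omega
      obtain ⟨Wbot, hWbotGood, hWbotCard, hWbotBound⟩ :=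
        ihm Sbot hbotmp hbotlt (a - 2) hbotbound
      have hWbot2 : ∀ z ∈ Wbot, (layer z : ℕ) + 2 ≤ a := by
        intro z hz
        rcases Nat.lt_or_ge a 2 with h2 | h2
        · exfalso
          have hSbote : Sbot = ∅ := by
            apply Finset.eq_empty_iff_forall_notMem.mpr
            intro x hx
            have hx2 := (Finset.mem_filter.mp hx).2
            omega
          have : Wbot = ∅ := by
            apply Finset.card_eq_zero.mp
            rw [hWbotCard, hSbote]
            simp
          rw [this] at hz
          exact absurd hz (Finset.notMem_empty z)
        · have := hWbotBound z hz
          omega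
      -- top chain via lemFmain
      obtain ⟨_, ⟨w₀, hw₀⟩, _, _⟩ :=
        lemFmain harc hlayers hin S hS B₀ a hB₀t hB₀ ha (B₀ - a) a (by omega) le_rfl
      obtain ⟨c, hcn, hcgood, hclink⟩ := goodN_extract (B₀ - a) w₀ hw₀
      have hclayer : ∀ k, k ≤ B₀ - a → (layer (c k) : ℕ) + k = B₀ :=
        fun k hk => goodN_layer (hcgood k hk)
      set Wtop := (Finset.range (B₀ - a + 1)).image c with hWtopdef
      have hWtopmem : ∀ v ∈ Wtop, ∃ k ≤ B₀ - a, c k = v := by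
        intro v hv
        obtain ⟨k, hk, hck⟩ := Finset.mem_image.mp hv
        exact ⟨k, by simpa using Finset.mem_range.mp hk |> Nat.lt_succ_iff.mp, hck⟩
      have hWtopcard : Wtop.card = B₀ - a + 1 := by
        rw [hWtopdef, Finset.card_image_of_injOn, Finset.card_range]
        intro k hk k' hk' hkk
        have hk1 : k ≤ B₀ - a := Nat.lt_succ_iff.mp (Finset.mem_range.mp hk)
        have hk2 : k' ≤ B₀ - a := Nat.lt_succ_iff.mp (Finset.mem_range.mp hk')
        have e1 := hclayer k hk1
        have e2 := hclayer k' hk2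
        rw [hkk] at e1
        omega
      have hWtoplow : ∀ v ∈ Wtop, a ≤ (layer v : ℕ) ∧ (layer v : ℕ) ≤ B₀ := by
        intro v hv
        obtain ⟨k, hk, rfl⟩ := hWtopmem v hv
        have := hclayer k hk
        omega
      have hdisj : Disjoint Wbot Wtop := by
        rw [Finset.disjoint_left]
        intro v hv1 hv2
        have h1 := hWbot2 v hv1
        have h2 := (hWtoplow v hv2).1
        omega
      refine ⟨Wbot ∪ Wtop, ⟨?_, ?_⟩, ?_, ?_⟩
      · -- distinct layers
        intro u hu v hv huv
        have huv' : (layer u : ℕ) = (layer v : ℕ) := by rw [huv]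
        rcases Finset.mem_union.mp hu with hub | hut <;>
          rcases Finset.mem_union.mp hv with hvb | hvt
        · exact hWbotGood.1 u hub v hvb huv
        · have := hWbot2 u hub; have := (hWtoplow v hvt).1; omega
        · have := hWbot2 v hvb; have := (hWtoplow u hut).1; omega
        · obtain ⟨k, hk, rfl⟩ := hWtopmem u hut
          obtain ⟨k', hk', rfl⟩ := hWtopmem v hvt
          have e1 := hclayer k hk
          have e2 := hclayer k' hk'
          have : k = k' := by omega
          rw [this]
      · -- no consecutive arcs
        intro u hu v hv hlv
        rcases Finset.mem_union.mp hu with hub | hut <;>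
          rcases Finset.mem_union.mp hv with hvb | hvt
        · exact hWbotGood.2 u hub v hvb hlv
        · have h1 := hWbot2 u hub
          have h2 := (hWtoplow v hvt).1
          omega
        · have h1 := hWbot2 v hvb
          have h2 := (hWtoplow u hut).1
          omega
        · obtain ⟨k, hk, rfl⟩ := hWtopmem u hut
          obtain ⟨k', hk', rfl⟩ := hWtopmem v hvt
          have e1 := hclayer k hk
          have e2 := hclayer k' hk'
          have hkk : k = k' + 1 := by omega
          subst hkk
          exact hclink k' (by omega)
      · -- cardinality
        rw [Finset.card_union_of_disjoint hdisj, hWbotCard, hWtopcard]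
        omega
      · -- layer bound
        intro v hv
        rcases Finset.mem_union.mp hv with hvb | hvt
        · have := hWbotBound v hvb; omega
        · have := (hWtoplow v hvt).2; omega

end Ctx

end MP4



/-- In a single-sourced layered DAG there is a maximum-size multipacking with at
most one vertex per layer. -/
theorem stmt_4 {V : Type*} [Fintype V] (A : V → V → Prop) (t : ℕ)
    (layer : V → Fin (t+1))
    (harc : ∀ u v, A u v → (layer v : ℕ) = (layer u : ℕ) + 1)
    (hlayers : ∀ i : Fin (t+1), ∃ v, layer v = i)
    (hsource : ∃! s : V, layer s = (0 : Fin (t+1)))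
    (hin : ∀ v, layer v ≠ (0 : Fin (t+1)) → ∃ u, A u v) :
    ∃ S : Finset V, IsMultipacking A S ∧
      (∀ S' : Finset V, IsMultipacking A S' → S'.card ≤ S.card) ∧
      ∀ i : Fin (t+1), 1 ≤ (i : ℕ) → (S.filter (fun v => layer v = i)).card ≤ 1 := by
  classical
  have hempty : (∅ : Finset V) ∈ Finset.univ.powerset.filter (fun S => IsMultipacking A S) := by
    refine Finset.mem_filter.mpr ⟨Finset.empty_mem_powerset _, ?_⟩
    intro v e he
    simp
  obtain ⟨S₀, hS₀mem, hS₀max⟩ :=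
    Finset.exists_max_image (Finset.univ.powerset.filter (fun S => IsMultipacking A S))
      Finset.card ⟨∅, hempty⟩
  have hS₀mp : IsMultipacking A S₀ := (Finset.mem_filter.mp hS₀mem).2
  obtain ⟨W, hWgood, hWcard, -⟩ :=
    MP4.lemB harc hlayers hsource hin S₀.card S₀ hS₀mp le_rfl t (fun z _ => Fin.is_le _)
  refine ⟨W, MP4.goodSet_multipacking harc hWgood, ?_, ?_⟩
  · intro S' hS'
    have hmem : S' ∈ Finset.univ.powerset.filter (fun S => IsMultipacking A S) :=
      Finset.mem_filter.mpr ⟨Finset.mem_powerset.mpr (Finset.subset_univ _), hS'⟩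
    calc S'.card ≤ S₀.card := hS₀max S' hmem
      _ = W.card := hWcard.symm
  · intro i hi
    apply Finset.card_le_one.mpr
    intro u hu v hv
    have hu' := Finset.mem_filter.mp hu
    have hv' := Finset.mem_filter.mp hv
    exact hWgood.1 u hu'.1 v hv'.1 (by rw [hu'.2, hv'.2])
end

section
/- Let D be a finite digraph in which every vertex has out-degree at most Δ, where Δ ≥ 1. If D admits a dominating broadcast of cost k (k ≥ 1), then D has at most k(k+1)Δ^k vertices. -/
open scoped Classical

lemma exists_path_of_ddist_le {V : Type*} (A : V → V → Prop) (t v : V) (e : ℕ)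
    (h : ddist A t v ≤ (e : ℕ∞)) : ∃ j ≤ e, HasPath A j t v := by
  by_contra hc
  push_neg at hc
  have hlb : ((e : ℕ∞) + 1) ≤ ddist A t v := by
    apply le_sInf
    rintro n ⟨j, rfl, hp⟩
    have : e < j := Nat.lt_of_not_le (fun hle => hc j hle hp)
    exact_mod_cast Nat.succ_le_of_lt this
  have h2 : (e + 1 : ℕ) ≤ e := by exact_mod_cast hlb.trans h
  omega

lemma path_count {V : Type*} [Fintype V] (A : V → V → Prop) (Δ : ℕ)
    (hdeg : ∀ v : V, (Finset.univ.filter (fun w => A v w)).card ≤ Δ) :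
    ∀ j t, (Finset.univ.filter (fun v => HasPath A j t v)).card ≤ Δ ^ j := by
  intro j
  induction j with
  | zero =>
    intro t
    have : (Finset.univ.filter (fun v => HasPath A 0 t v)) ⊆ {t} := by
      intro v hv
      simp only [Finset.mem_filter] at hv
      simp [HasPath] at hv
      simp [hv.symm]
    calc _ ≤ ({t} : Finset V).card := Finset.card_le_card this
      _ = 1 := Finset.card_singleton t
      _ ≤ Δ ^ 0 := by simp
  | succ n ih =>
    intro t
    have hsub : (Finset.univ.filter (fun v => HasPath A (n+1) t v)) ⊆
        (Finset.univ.filter (fun w => A t w)).biUnion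
          (fun w => Finset.univ.filter (fun v => HasPath A n w v)) := by
      intro v hv
      simp only [Finset.mem_filter, Finset.mem_biUnion, Finset.mem_univ, true_and] at *
      obtain ⟨w, hw, hp⟩ := hv
      exact ⟨w, hw, hp⟩
    calc _ ≤ _ := Finset.card_le_card hsub
      _ ≤ ∑ w ∈ Finset.univ.filter (fun w => A t w),
            (Finset.univ.filter (fun v => HasPath A n w v)).card :=
          Finset.card_biUnion_le
      _ ≤ ∑ _w ∈ Finset.univ.filter (fun w => A t w), Δ ^ n :=
          Finset.sum_le_sum (fun w _ => ih w)
      _ = (Finset.univ.filter (fun w => A t w)).card * Δ ^ n := by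
          simp [Finset.sum_const, mul_comm]
      _ ≤ Δ * Δ ^ n := Nat.mul_le_mul_right _ (hdeg t)
      _ = Δ ^ (n+1) := by ring

lemma ball_bound {V : Type*} [Fintype V] (A : V → V → Prop) (Δ : ℕ) (hΔ : 1 ≤ Δ)
    (hdeg : ∀ v : V, (Finset.univ.filter (fun w => A v w)).card ≤ Δ) (t : V) (e : ℕ) :
    (Finset.univ.filter (fun v => ddist A t v ≤ (e : ℕ∞))).card ≤ (e + 1) * Δ ^ e := by
  have hsub : (Finset.univ.filter (fun v => ddist A t v ≤ (e : ℕ∞))) ⊆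
      (Finset.range (e+1)).biUnion (fun j => Finset.univ.filter (fun v => HasPath A j t v)) := by
    intro v hv
    simp only [Finset.mem_filter, Finset.mem_univ, true_and] at hv
    obtain ⟨j, hj, hp⟩ := exists_path_of_ddist_le A t v e hv
    simp only [Finset.mem_biUnion, Finset.mem_range, Finset.mem_filter, Finset.mem_univ, true_and]
    exact ⟨j, Nat.lt_succ_of_le hj, hp⟩
  calc _ ≤ _ := Finset.card_le_card hsub
    _ ≤ ∑ j ∈ Finset.range (e+1), (Finset.univ.filter (fun v => HasPath A j t v)).card :=
        Finset.card_biUnion_le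
    _ ≤ ∑ j ∈ Finset.range (e+1), Δ ^ e := by
        apply Finset.sum_le_sum
        intro j hj
        exact (path_count A Δ hdeg j t).trans
          (Nat.pow_le_pow_right hΔ (Nat.lt_succ_iff.mp (Finset.mem_range.mp hj)))
    _ = (e + 1) * Δ ^ e := by simp [Finset.sum_const]

/-- A digraph of maximum out-degree at most Δ admitting a dominating broadcast of
cost k has at most k(k+1)Δ^k vertices. -/
theorem stmt_11 {V : Type*} [Fintype V] (A : V → V → Prop) (hirr : ∀ v, ¬ A v v)
    (Δ k : ℕ) (hΔ : 1 ≤ Δ) (hk : 1 ≤ k)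
    (hdeg : ∀ v : V, (Finset.univ.filter (fun w => A v w)).card ≤ Δ)
    (f : V → ℕ) (hf : IsDomBroadcast A f) (hcost : cost f = k) :
    Fintype.card V ≤ k * (k + 1) * Δ ^ k := by
  unfold IsDomBroadcast at hf
  unfold cost at hcost
  set S : Finset V := Finset.univ.filter (fun t => 1 ≤ f t) with hS
  have hft : ∀ t, f t ≤ k := by
    intro t
    rw [← hcost]
    exact Finset.single_le_sum (fun i _ => Nat.zero_le _) (Finset.mem_univ t)
  have hScard : S.card ≤ k := by
    calc S.card = ∑ _t ∈ S, 1 := by simp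
      _ ≤ ∑ t ∈ S, f t := Finset.sum_le_sum (fun t ht => (Finset.mem_filter.mp ht).2)
      _ ≤ ∑ t, f t := Finset.sum_le_sum_of_subset (Finset.subset_univ S)
      _ = k := hcost
  have hcover : (Finset.univ : Finset V) ⊆
      S.biUnion (fun t => Finset.univ.filter (fun v => ddist A t v ≤ (f t : ℕ∞))) := by
    intro v _
    obtain ⟨t, h1, h2⟩ := hf v
    simp only [Finset.mem_biUnion, Finset.mem_filter, Finset.mem_univ, true_and, hS]
    exact ⟨t, h1, h2⟩
  calc Fintype.card V = (Finset.univ : Finset V).card := rfl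
    _ ≤ _ := Finset.card_le_card hcover
    _ ≤ ∑ t ∈ S, (Finset.univ.filter (fun v => ddist A t v ≤ (f t : ℕ∞))).card :=
        Finset.card_biUnion_le
    _ ≤ ∑ t ∈ S, (k + 1) * Δ ^ k := by
        apply Finset.sum_le_sum
        intro t _
        refine (ball_bound A Δ hΔ hdeg t (f t)).trans ?_
        exact Nat.mul_le_mul (by have := hft t; omega) (Nat.pow_le_pow_right hΔ (hft t))
    _ = S.card * ((k + 1) * Δ ^ k) := by simp [Finset.sum_const]
    _ ≤ k * ((k + 1) * Δ ^ k) := Nat.mul_le_mul_right _ hScard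
    _ = k * (k + 1) * Δ ^ k := by ring
end

section
/- Let D be a finite digraph and let S be an absorbing set of D of minimum cardinality. Then no vertex of D absorbs two distinct vertices of S. Consequently, every minimum-size absorbing set of D is a multipacking, and the multipacking number of D is at least the minimum size of an absorbing set of D. -/
open scoped Classical

/-- S ⊆ V is absorbing if every vertex of the digraph is reachable by a directed
path from some vertex of S. -/
def IsAbsorbing {V : Type*} (A : V → V → Prop) (S : Finset V) : Prop :=
  ∀ v : V, ∃ u ∈ S, ddist A u v ≠ ⊤

/-!
Two vertices `u ≠ v` of an absorbing set `S` that are both reachable from some `w` can be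
replaced by `w` alone: everything absorbed by `u` or `v` is absorbed by `w`. So a minimum
absorbing set meets the reach of every vertex at most once, which is far stronger than the
multipacking condition.
-/

lemma HasPath.trans_s15 {V : Type*} {A : V → V → Prop} :
    ∀ {k m : ℕ} {u v w : V}, HasPath A k u v → HasPath A m v w → HasPath A (k + m) u w
  | 0, _, _, _, _, h₁, h₂ => by cases h₁; simpa using h₂
  | _ + 1, _, _, _, _, ⟨x, hux, hx⟩, h₂ => by
    rw [Nat.succ_add]
    exact ⟨x, hux, hx.trans_s15 h₂⟩

lemma ddist_ne_top_iff {V : Type*} {A : V → V → Prop} {u v : V} :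
    ddist A u v ≠ ⊤ ↔ ∃ k : ℕ, HasPath A k u v := by
  constructor
  · intro h
    by_contra! hn
    refine h (sInf_eq_top.2 ?_)
    rintro _ ⟨k, -, hk⟩
    exact absurd hk (hn k)
  · rintro ⟨k, hk⟩
    exact ne_top_of_le_ne_top (ENat.natCast_ne_top k) (sInf_le ⟨k, rfl, hk⟩)

lemma ddist_ne_top_trans {V : Type*} {A : V → V → Prop} {u v w : V}
    (h₁ : ddist A u v ≠ ⊤) (h₂ : ddist A v w ≠ ⊤) : ddist A u w ≠ ⊤ := by
  obtain ⟨k, hk⟩ := ddist_ne_top_iff.1 h₁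
  obtain ⟨m, hm⟩ := ddist_ne_top_iff.1 h₂
  exact ddist_ne_top_iff.2 ⟨k + m, hk.trans_s15 hm⟩

lemma IsAbsorbing.of_absorbs {V : Type*} {A : V → V → Prop} {S T : Finset V}
    (hS : IsAbsorbing A S) (hST : ∀ u ∈ S, ∃ t ∈ T, ddist A t u ≠ ⊤) : IsAbsorbing A T := by
  intro x
  obtain ⟨u, hu, hux⟩ := hS x
  obtain ⟨t, ht, htu⟩ := hST u hu
  exact ⟨t, ht, ddist_ne_top_trans htu hux⟩

lemma IsAbsorbing.insert_sdiff_pair {V : Type*} {A : V → V → Prop} {S : Finset V}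
    (hS : IsAbsorbing A S) {w u v : V} (hwu : ddist A w u ≠ ⊤) (hwv : ddist A w v ≠ ⊤) :
    IsAbsorbing A (insert w (S \ {u, v})) := by
  refine hS.of_absorbs fun x hx => ?_
  by_cases hxuv : x = u ∨ x = v
  · refine ⟨w, Finset.mem_insert_self _ _, ?_⟩
    rcases hxuv with rfl | rfl <;> assumption
  · refine ⟨x, Finset.mem_insert_of_mem (by simp [hx, hxuv]), ?_⟩
    exact ddist_ne_top_iff.2 ⟨0, rfl⟩

lemma eq_of_ddist_ne_top_of_card_le {V : Type*} {A : V → V → Prop} {S : Finset V}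
    (habs : IsAbsorbing A S) (hmin : ∀ S' : Finset V, IsAbsorbing A S' → S.card ≤ S'.card)
    {w u v : V} (hu : u ∈ S) (hv : v ∈ S) (hwu : ddist A w u ≠ ⊤) (hwv : ddist A w v ≠ ⊤) :
    u = v := by
  by_contra huv
  have hpair : ({u, v} : Finset V) ⊆ S := Finset.insert_subset hu (Finset.singleton_subset_iff.2 hv)
  have hsmaller : (insert w (S \ {u, v})).card < S.card := by
    have := Finset.card_insert_le w (S \ {u, v})
    have := Finset.card_sdiff_add_card_eq_card hpair
    have := Finset.card_pair huv
    omega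
  exact (hmin _ (habs.insert_sdiff_pair hwu hwv)).not_gt hsmaller

lemma isMultipacking_of_subsingleton_reach {V : Type*} [Fintype V] {A : V → V → Prop}
    {S : Finset V} (hS : ∀ w u v : V, u ∈ S → v ∈ S → ddist A w u ≠ ⊤ → ddist A w v ≠ ⊤ → u = v) :
    IsMultipacking A S := by
  intro w e he
  refine le_trans (Finset.card_le_one.2 fun a ha b hb => ?_) he
  rw [Finset.mem_filter] at ha hb
  exact hS w a b ha.1 hb.1 (ne_top_of_le_ne_top (ENat.natCast_ne_top e) ha.2)
    (ne_top_of_le_ne_top (ENat.natCast_ne_top e) hb.2)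

lemma IsMultipacking.card_le_mpNum {V : Type*} [Fintype V] {A : V → V → Prop} {S : Finset V}
    (hS : IsMultipacking A S) : S.card ≤ mpNum A :=
  le_csSup ⟨Fintype.card V, by rintro _ ⟨T, -, rfl⟩; exact T.card_le_univ⟩ ⟨S, hS, rfl⟩

theorem stmt_15_general {V : Type*} [Fintype V] (A : V → V → Prop)
    (S : Finset V) (habs : IsAbsorbing A S)
    (hmin : ∀ S' : Finset V, IsAbsorbing A S' → S.card ≤ S'.card) :
    (∀ w u v : V, u ∈ S → v ∈ S →
        ddist A w u ≠ ⊤ → ddist A w v ≠ ⊤ → u = v) ∧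
      IsMultipacking A S ∧ S.card ≤ mpNum A := by
  have hreach : ∀ w u v : V, u ∈ S → v ∈ S → ddist A w u ≠ ⊤ → ddist A w v ≠ ⊤ → u = v :=
    fun _ _ _ => eq_of_ddist_ne_top_of_card_le habs hmin
  have hmp := isMultipacking_of_subsingleton_reach hreach
  exact ⟨hreach, hmp, hmp.card_le_mpNum⟩

/-- No vertex absorbs two distinct vertices of a minimum-size absorbing set;
consequently such a set is a multipacking and mp(D) is at least its size. -/
theorem stmt_15 {V : Type*} [Fintype V] (A : V → V → Prop) (hirr : ∀ v, ¬ A v v)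
    (S : Finset V) (habs : IsAbsorbing A S)
    (hmin : ∀ S' : Finset V, IsAbsorbing A S' → S.card ≤ S'.card) :
    (∀ w u v : V, u ∈ S → v ∈ S →
        ddist A w u ≠ ⊤ → ddist A w v ≠ ⊤ → u = v) ∧
      IsMultipacking A S ∧ S.card ≤ mpNum A :=
  stmt_15_general A S habs hmin
end
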